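/- arXiv:2604.28141 — 2 statements merged into one kernel-verified Lean document; each statement's English description precedes it below -/
import Mathlib

section
/- Let D₁ and D₂ be two disjoint nonempty finite sets of tuples with D = D₁ ∪ D₂ of total size N, and let f : D → ℝ be any function (e.g., f(t) = e(t)·1[P_f(t)]). Let α_i = |D_i|/N, and define σ_i² = (α_i N)² · [ (1/(α_i N)) Σ_{t∈D_i} f(t)² − ((1/(α_i N)) Σ_{t∈D_i} f(t))² ] for i ∈ {1, 2}, and define σ_{1,2}² analogously over D with α = 1. Then σ₁ + σ₂ ≤ σ_{1,2}, i.e., the sum of uniform-sampling estimator standard deviations of the two parts is at most the estimator standard deviation of the union. -/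
open Finset

/-- Squared scaled standard deviation of the uniform-sampling Horvitz–Thompson
estimator on a finite stratum `D`: `σ² = |D|² (E[f²] - (E[f])²)` under the uniform
distribution on `D`. -/
noncomputable def estVar {ι : Type*} [DecidableEq ι] (D : Finset ι) (f : ι → ℝ) : ℝ :=
  (D.card : ℝ) ^ 2 *
    ((∑ t ∈ D, (f t) ^ 2) / (D.card : ℝ) - ((∑ t ∈ D, f t) / (D.card : ℝ)) ^ 2)

lemma aux_M_nonneg (n₁ n₂ a c p q : ℝ) (hn1 : 0 < n₁) (hn2 : 0 < n₂)
    (h1 : p^2 ≤ n₁*a) (h2 : q^2 ≤ n₂*c) :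
    0 ≤ n₂ * a + n₁ * c - 2 * p * q := by
  nlinarith [sq_nonneg (n₂*p - n₁*q), mul_pos hn1 hn2, sq_nonneg (p-q), sq_nonneg (p+q),
    mul_le_mul_of_nonneg_left h1 (sq_nonneg n₂), mul_le_mul_of_nonneg_left h2 (sq_nonneg n₁)]

lemma aux_key (n₁ n₂ a c p q : ℝ) (hn1 : 0 < n₁) (hn2 : 0 < n₂)
    (h1 : p^2 ≤ n₁*a) (h2 : q^2 ≤ n₂*c) :
    (n₁ * a - p ^ 2) * (n₂ * c - q ^ 2) ≤ ((n₂ * a + n₁ * c - 2 * p * q) / 2) ^ 2 := by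
  have hU : 0 ≤ n₁*n₂*(n₂*a) - (n₂*p)^2 := by
    nlinarith [mul_le_mul_of_nonneg_left h1 (sq_nonneg n₂)]
  have hW : 0 ≤ n₁*n₂*(n₁*c) - (n₁*q)^2 := by
    nlinarith [mul_le_mul_of_nonneg_left h2 (sq_nonneg n₁)]
  nlinarith [mul_pos (mul_pos hn1 hn2) (mul_pos hn1 hn2),
    sq_nonneg (n₁*n₂*(n₂*a) - (n₂*p)^2 - (n₁*n₂*(n₁*c) - (n₁*q)^2)),
    sq_nonneg ((n₁*q - n₂*p)^2),
    mul_nonneg (sq_nonneg (n₁*q - n₂*p)) hU,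
    mul_nonneg (sq_nonneg (n₁*q - n₂*p)) hW]

lemma estVar_eq' {ι : Type*} [DecidableEq ι] (D : Finset ι) (f : ι → ℝ)
    (hD : D.Nonempty) :
    estVar D f = (D.card : ℝ) * (∑ t ∈ D, (f t) ^ 2) - (∑ t ∈ D, f t) ^ 2 := by
  have hn : (0 : ℝ) < (D.card : ℝ) := by exact_mod_cast Finset.card_pos.mpr hD
  unfold estVar
  field_simp

/-- Merging two disjoint nonempty strata: the sum of the uniform-sampling estimator
standard deviations of the parts is at most that of the union:
`σ₁ + σ₂ ≤ σ_{1,2}`. -/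
theorem stddev_superadditive_of_disjoint {ι : Type*} [DecidableEq ι]
    (D₁ D₂ : Finset ι) (hdisj : Disjoint D₁ D₂)
    (h1 : D₁.Nonempty) (h2 : D₂.Nonempty) (f : ι → ℝ) :
    Real.sqrt (estVar D₁ f) + Real.sqrt (estVar D₂ f) ≤
      Real.sqrt (estVar (D₁ ∪ D₂) f) := by
  set n₁ : ℝ := (D₁.card : ℝ) with hn₁
  set n₂ : ℝ := (D₂.card : ℝ) with hn₂
  set a : ℝ := ∑ t ∈ D₁, (f t) ^ 2 with ha
  set c : ℝ := ∑ t ∈ D₂, (f t) ^ 2 with hc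
  set p : ℝ := ∑ t ∈ D₁, f t with hp
  set q : ℝ := ∑ t ∈ D₂, f t with hq
  have hn1 : 0 < n₁ := by simp only [hn₁]; exact_mod_cast Finset.card_pos.mpr h1
  have hn2 : 0 < n₂ := by simp only [hn₂]; exact_mod_cast Finset.card_pos.mpr h2
  have hE1 : estVar D₁ f = n₁ * a - p ^ 2 := estVar_eq' D₁ f h1
  have hE2 : estVar D₂ f = n₂ * c - q ^ 2 := estVar_eq' D₂ f h2
  have hEU : estVar (D₁ ∪ D₂) f = (n₁ + n₂) * (a + c) - (p + q) ^ 2 := by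
    rw [estVar_eq' _ f (h1.mono Finset.subset_union_left)]
    rw [Finset.sum_union hdisj, Finset.sum_union hdisj,
      Finset.card_union_of_disjoint hdisj]
    push_cast
    ring
  -- Cauchy–Schwarz on each stratum
  have hcs1 : p ^ 2 ≤ n₁ * a := by
    simpa [hn₁, ha, hp] using sq_sum_le_card_mul_sum_sq (s := D₁) (f := f)
  have hcs2 : q ^ 2 ≤ n₂ * c := by
    simpa [hn₂, hc, hq] using sq_sum_le_card_mul_sum_sq (s := D₂) (f := f)
  have hV1 : 0 ≤ n₁ * a - p ^ 2 := by linarith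
  have hV2 : 0 ≤ n₂ * c - q ^ 2 := by linarith
  have ha0 : 0 ≤ a := Finset.sum_nonneg fun t _ => sq_nonneg _
  have hc0 : 0 ≤ c := Finset.sum_nonneg fun t _ => sq_nonneg _
  -- the middle quantity
  have hM0 : 0 ≤ n₂ * a + n₁ * c - 2 * p * q :=
    aux_M_nonneg n₁ n₂ a c p q hn1 hn2 hcs1 hcs2
  have hkey : (n₁ * a - p ^ 2) * (n₂ * c - q ^ 2) ≤ ((n₂ * a + n₁ * c - 2 * p * q) / 2) ^ 2 :=
    aux_key n₁ n₂ a c p q hn1 hn2 hcs1 hcs2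
  have hsqrt : Real.sqrt ((n₁ * a - p ^ 2) * (n₂ * c - q ^ 2)) ≤
      (n₂ * a + n₁ * c - 2 * p * q) / 2 := by
    calc Real.sqrt ((n₁ * a - p ^ 2) * (n₂ * c - q ^ 2))
        ≤ Real.sqrt (((n₂ * a + n₁ * c - 2 * p * q) / 2) ^ 2) := Real.sqrt_le_sqrt hkey
      _ = (n₂ * a + n₁ * c - 2 * p * q) / 2 := Real.sqrt_sq (by linarith)
  have hsum : (Real.sqrt (estVar D₁ f) + Real.sqrt (estVar D₂ f)) ^ 2 ≤
      estVar (D₁ ∪ D₂) f := by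
    have hmul : Real.sqrt (estVar D₁ f) * Real.sqrt (estVar D₂ f) =
        Real.sqrt ((n₁ * a - p ^ 2) * (n₂ * c - q ^ 2)) := by
      rw [hE1, hE2, ← Real.sqrt_mul hV1]
    have hs1 : Real.sqrt (estVar D₁ f) ^ 2 = n₁ * a - p ^ 2 := by
      rw [hE1]; exact Real.sq_sqrt hV1
    have hs2 : Real.sqrt (estVar D₂ f) ^ 2 = n₂ * c - q ^ 2 := by
      rw [hE2]; exact Real.sq_sqrt hV2
    have hexp : (Real.sqrt (estVar D₁ f) + Real.sqrt (estVar D₂ f)) ^ 2 =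
        Real.sqrt (estVar D₁ f) ^ 2 + Real.sqrt (estVar D₂ f) ^ 2 +
          2 * (Real.sqrt (estVar D₁ f) * Real.sqrt (estVar D₂ f)) := by ring
    rw [hexp, hs1, hs2, hmul, hEU]
    linarith [hsqrt]
  calc Real.sqrt (estVar D₁ f) + Real.sqrt (estVar D₂ f)
      = Real.sqrt ((Real.sqrt (estVar D₁ f) + Real.sqrt (estVar D₂ f)) ^ 2) :=
        (Real.sqrt_sq (by positivity)).symm
    _ ≤ Real.sqrt (estVar (D₁ ∪ D₂) f) := Real.sqrt_le_sqrt hsum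
end

section
/- (Superadditivity of the scaled standard deviation) Let μ₁, μ₂ be finite measures on ℝ supported on finite sets with total masses m₁, m₂ > 0, and for a finite measure μ of mass m define S(μ) = m·sqrt( (1/m)∫ x² dμ − ((1/m)∫ x dμ)² ). Then S(μ₁) + S(μ₂) ≤ S(μ₁ + μ₂). -/
open MeasureTheory

/-- The population-size-scaled standard deviation of a finite measure `μ` of total mass
`m`: `S(μ) = m * sqrt((1/m) ∫ x² dμ − ((1/m) ∫ x dμ)²)`. -/
noncomputable def scaledStdDev (μ : Measure ℝ) : ℝ :=
  (μ Set.univ).toReal *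
    Real.sqrt ((1 / (μ Set.univ).toReal) * ∫ x, x ^ 2 ∂μ -
      ((1 / (μ Set.univ).toReal) * ∫ x, x ∂μ) ^ 2)

/-- A measurable function is integrable w.r.t. a finite measure supported on a finite set. -/
lemma integrable_of_finsetSupport {μ : Measure ℝ} [IsFiniteMeasure μ] {s : Finset ℝ}
    (hs : μ (↑s)ᶜ = 0) {f : ℝ → ℝ} (hf : Measurable f) : Integrable f μ := by
  refine (integrable_const (∑ y ∈ s, ‖f y‖)).mono' hf.aestronglyMeasurable ?_
  have hae : ∀ᵐ x ∂μ, x ∈ (s : Set ℝ) := by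
    rw [ae_iff]
    exact hs
  filter_upwards [hae] with x hx
  exact Finset.single_le_sum (fun i _ => norm_nonneg (f i)) hx

/-- Cauchy–Schwarz-type inequality: `(∫x)² ≤ m ∫x²` for a finite measure of positive mass. -/
lemma sq_integral_le {μ : Measure ℝ} [IsFiniteMeasure μ]
    (h1 : Integrable (fun x : ℝ => x) μ) (h2 : Integrable (fun x : ℝ => x ^ 2) μ)
    (hm : 0 < (μ Set.univ).toReal) :
    (∫ x, x ∂μ) ^ 2 ≤ (μ Set.univ).toReal * ∫ x, x ^ 2 ∂μ := by
  set m : ℝ := (μ Set.univ).toReal with hm'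
  set A : ℝ := ∫ x, x ∂μ with hA
  have key : 0 ≤ ∫ x, (m * x - A) ^ 2 ∂μ :=
    integral_nonneg fun x => sq_nonneg _
  have h3 : Integrable (fun x : ℝ => m ^ 2 * x ^ 2) μ := h2.const_mul _
  have h4 : Integrable (fun x : ℝ => 2 * m * A * x) μ := h1.const_mul _
  have E1 : (∫ x, (m ^ 2 * x ^ 2 - 2 * m * A * x) + A ^ 2 ∂μ)
      = (∫ x, m ^ 2 * x ^ 2 - 2 * m * A * x ∂μ) + ∫ _x, (A ^ 2 : ℝ) ∂μ :=
    integral_add (h3.sub h4) (integrable_const _)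
  have E2 : (∫ x, m ^ 2 * x ^ 2 - 2 * m * A * x ∂μ)
      = (∫ x, m ^ 2 * x ^ 2 ∂μ) - ∫ x, 2 * m * A * x ∂μ := integral_sub h3 h4
  have E3 : (∫ x, m ^ 2 * x ^ 2 ∂μ) = m ^ 2 * ∫ x, x ^ 2 ∂μ := integral_const_mul _ _
  have E4 : (∫ x, 2 * m * A * x ∂μ) = 2 * m * A * A := by
    rw [integral_const_mul]
  have E5 : (∫ _x, (A ^ 2 : ℝ) ∂μ) = A ^ 2 * m := by
    rw [integral_const, smul_eq_mul]; exact mul_comm _ _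
  have expand : ∫ x, (m * x - A) ^ 2 ∂μ
      = m ^ 2 * (∫ x, x ^ 2 ∂μ) - 2 * m * A * A + A ^ 2 * m := by
    have : ∀ x : ℝ, (m * x - A) ^ 2 = (m ^ 2 * x ^ 2 - 2 * m * A * x) + A ^ 2 := by
      intro x; ring
    simp_rw [this]
    rw [E1, E2, E3, E4, E5]
  rw [expand] at key
  have : 0 ≤ m * (m * (∫ x, x ^ 2 ∂μ) - A ^ 2) := by nlinarith
  nlinarith

/-- Purely algebraic core: superadditivity of `√(m B − A²)`. -/
lemma sqrt_superadd (m₁ m₂ A₁ A₂ B₁ B₂ : ℝ) (hm₁ : 0 < m₁) (hm₂ : 0 < m₂)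
    (hP₁ : 0 ≤ m₁ * B₁ - A₁ ^ 2) (hP₂ : 0 ≤ m₂ * B₂ - A₂ ^ 2) :
    Real.sqrt (m₁ * B₁ - A₁ ^ 2) + Real.sqrt (m₂ * B₂ - A₂ ^ 2)
      ≤ Real.sqrt ((m₁ + m₂) * (B₁ + B₂) - (A₁ + A₂) ^ 2) := by
  set p₁ : ℝ := Real.sqrt (m₁ * B₁ - A₁ ^ 2) with hp1
  set p₂ : ℝ := Real.sqrt (m₂ * B₂ - A₂ ^ 2) with hp2
  have hp₁ : 0 ≤ p₁ := Real.sqrt_nonneg _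
  have hp₂ : 0 ≤ p₂ := Real.sqrt_nonneg _
  have hq₁ : p₁ ^ 2 = m₁ * B₁ - A₁ ^ 2 := Real.sq_sqrt hP₁
  have hq₂ : p₂ ^ 2 = m₂ * B₂ - A₂ ^ 2 := Real.sq_sqrt hP₂
  have cross : 2 * (p₁ * p₂) ≤ m₁ * B₂ + m₂ * B₁ - 2 * (A₁ * A₂) := by
    have h1 : m₁ * m₂ * (2 * (p₁ * p₂)) ≤ m₂ ^ 2 * p₁ ^ 2 + m₁ ^ 2 * p₂ ^ 2 := by
      nlinarith [sq_nonneg (m₂ * p₁ - m₁ * p₂)]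
    have h2 : m₂ ^ 2 * p₁ ^ 2 + m₁ ^ 2 * p₂ ^ 2
        ≤ m₁ * m₂ * (m₁ * B₂ + m₂ * B₁ - 2 * (A₁ * A₂)) := by
      rw [hq₁, hq₂]
      nlinarith [sq_nonneg (m₂ * A₁ - m₁ * A₂)]
    have := h1.trans h2
    exact le_of_mul_le_mul_left this (by positivity : (0:ℝ) < m₁ * m₂)
  have hsum : (p₁ + p₂) ^ 2 ≤ (m₁ + m₂) * (B₁ + B₂) - (A₁ + A₂) ^ 2 := by
    have h : (p₁ + p₂) ^ 2 = p₁ ^ 2 + p₂ ^ 2 + 2 * (p₁ * p₂) := by ring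
    rw [h, hq₁, hq₂]
    nlinarith [cross]
  calc p₁ + p₂ = Real.sqrt ((p₁ + p₂) ^ 2) := (Real.sqrt_sq (by linarith)).symm
    _ ≤ Real.sqrt ((m₁ + m₂) * (B₁ + B₂) - (A₁ + A₂) ^ 2) := Real.sqrt_le_sqrt hsum

/-- Superadditivity of the scaled standard deviation: for finite measures `μ₁, μ₂` on ℝ
supported on finite sets with positive total masses, `S(μ₁) + S(μ₂) ≤ S(μ₁ + μ₂)`. -/
theorem scaledStdDev_superadditive (μ₁ μ₂ : Measure ℝ)
    [IsFiniteMeasure μ₁] [IsFiniteMeasure μ₂]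
    (hs₁ : ∃ s : Finset ℝ, μ₁ (↑s)ᶜ = 0) (hs₂ : ∃ s : Finset ℝ, μ₂ (↑s)ᶜ = 0)
    (hm₁ : 0 < (μ₁ Set.univ).toReal) (hm₂ : 0 < (μ₂ Set.univ).toReal) :
    scaledStdDev μ₁ + scaledStdDev μ₂ ≤ scaledStdDev (μ₁ + μ₂) := by
  obtain ⟨s₁, hs₁⟩ := hs₁
  obtain ⟨s₂, hs₂⟩ := hs₂
  have hx₁ : Integrable (fun x : ℝ => x) μ₁ := integrable_of_finsetSupport hs₁ measurable_id
  have hx₂ : Integrable (fun x : ℝ => x) μ₂ := integrable_of_finsetSupport hs₂ measurable_id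
  have hx₁' : Integrable (fun x : ℝ => x ^ 2) μ₁ :=
    integrable_of_finsetSupport hs₁ (measurable_id.pow_const 2)
  have hx₂' : Integrable (fun x : ℝ => x ^ 2) μ₂ :=
    integrable_of_finsetSupport hs₂ (measurable_id.pow_const 2)
  have hP₁ := sq_integral_le hx₁ hx₁' hm₁
  have hP₂ := sq_integral_le hx₂ hx₂' hm₂
  have hmass : ((μ₁ + μ₂) Set.univ).toReal
      = (μ₁ Set.univ).toReal + (μ₂ Set.univ).toReal := by
    rw [Measure.add_apply, ENNReal.toReal_add (measure_ne_top _ _) (measure_ne_top _ _)]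
  have hIA : (∫ x, x ∂(μ₁ + μ₂)) = (∫ x, x ∂μ₁) + ∫ x, x ∂μ₂ := integral_add_measure hx₁ hx₂
  have hIB : (∫ x, x ^ 2 ∂(μ₁ + μ₂)) = (∫ x, x ^ 2 ∂μ₁) + ∫ x, x ^ 2 ∂μ₂ :=
    integral_add_measure hx₁' hx₂'
  -- rewrite scaledStdDev as √(m B − A²)
  have key : ∀ (m A B : ℝ), 0 < m →
      m * Real.sqrt (1 / m * B - (1 / m * A) ^ 2) = Real.sqrt (m * B - A ^ 2) := by
    intro m A B hm
    rw [show m * B - A ^ 2 = m ^ 2 * (1 / m * B - (1 / m * A) ^ 2) by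
      field_simp]
    rw [Real.sqrt_mul (sq_nonneg m), Real.sqrt_sq hm.le]
  rw [scaledStdDev, scaledStdDev, scaledStdDev, hmass, hIA, hIB,
    key _ _ _ hm₁, key _ _ _ hm₂, key _ _ _ (by positivity)]
  exact sqrt_superadd _ _ _ _ _ _ hm₁ hm₂ (by linarith) (by linarith)
end
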